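/- arXiv:1309.5766 — 3 statements merged into one kernel-verified Lean document; each statement's English description precedes it below -/
import Mathlib

section
/- Let X = (X_t)_{t∈[0,T]} be an F-adapted process with each X_t P-integrable. If the set P(X,F) of probability measures on (Ω, F_T) equivalent to P|_{F_T} under which X is an F-martingale is a singleton, then the initial σ-algebra F_0 is P-trivial, i.e. P(A) ∈ {0,1} for every A ∈ F_0. -/
open MeasureTheory ProbabilityTheory Filter Set

noncomputable section

namespace PaperStmts

variable {Ω : Type*}

/-- The process `X` is adapted to the filtration `F` on the time interval `[0, T]`. -/
def AdaptedOn (F : ℝ → (MeasurableSpace Ω)) (X : ℝ → Ω → ℝ) (T : ℝ) : Prop :=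
  ∀ t ∈ Set.Icc (0 : ℝ) T, Measurable[F t] (X t)

/-- The process `X` is a `(Q, F)`-martingale on `[0, T]`: every `X t` is `Q`-integrable and
`E^Q[X t | F s] = X s` `Q`-a.s. for all `0 ≤ s ≤ t ≤ T`. -/
def IsMartingaleOn {mΩ : MeasurableSpace Ω} (Q : Measure Ω)
    (F : ℝ → MeasurableSpace Ω) (X : ℝ → Ω → ℝ) (T : ℝ) : Prop :=
  (∀ t ∈ Set.Icc (0 : ℝ) T, Integrable (X t) Q) ∧
    ∀ s t : ℝ, 0 ≤ s → s ≤ t → t ≤ T → (Q[X t | F s]) =ᵐ[Q] X s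

/-- The set `ℙ(X, F)` of probability measures on `(Ω, F T)` equivalent to the restriction
of `P` to `F T` under which `X` is an `F`-martingale on `[0, T]`. -/
def MartMeasures {m𝓕 : MeasurableSpace Ω} (P : Measure Ω)
    (F : ℝ → MeasurableSpace Ω) (T : ℝ) (hFT : F T ≤ m𝓕) (X : ℝ → Ω → ℝ) :
    Set (@Measure Ω (F T)) :=
  {Q | @IsProbabilityMeasure Ω (F T) Q ∧
    Q ≪ P.trim hFT ∧ P.trim hFT ≪ Q ∧ IsMartingaleOn Q F X T}

/-- The set `ℚ(X, F)` of all probability measures on `(Ω, F T)` under which `X` is an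
`F`-martingale on `[0, T]`. -/
def QMeasures (F : ℝ → MeasurableSpace Ω) (T : ℝ) (X : ℝ → Ω → ℝ) :
    Set (@Measure Ω (F T)) :=
  {Q | @IsProbabilityMeasure Ω (F T) Q ∧ IsMartingaleOn Q F X T}

/-- `Q` is an extremal point of `ℚ(X, F)`: it belongs to `ℚ(X, F)` and cannot be written as a
strictly convex combination of two elements of `ℚ(X, F)` other than trivially. -/
def IsExtremalIn (F : ℝ → MeasurableSpace Ω) (T : ℝ) (X : ℝ → Ω → ℝ)
    (Q : @Measure Ω (F T)) : Prop :=
  Q ∈ QMeasures F T X ∧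
    ∀ (α : ℝ) (Q₁ Q₂ : @Measure Ω (F T)), 0 < α → α < 1 →
      Q₁ ∈ QMeasures F T X → Q₂ ∈ QMeasures F T X →
      Q = ENNReal.ofReal α • Q₁ + ENNReal.ofReal (1 - α) • Q₂ →
      Q₁ = Q ∧ Q₂ = Q

/-- The trajectories of `X` are càdlàg on `[0, T]`: right-continuous on `[0, T)` and with
left limits on `(0, T]`. -/
def CadlagOn (X : ℝ → Ω → ℝ) (T : ℝ) : Prop :=
  ∀ ω : Ω,
    (∀ t ∈ Set.Ico (0 : ℝ) T, ContinuousWithinAt (fun s => X s ω) (Set.Ici t) t) ∧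
    (∀ t ∈ Set.Ioc (0 : ℝ) T,
      ∃ l : ℝ, Tendsto (fun s => X s ω) (nhdsWithin t (Set.Iio t)) (nhds l))

/-- `E^Q[sup_{t ∈ [0, T]} X_t ^ 2] < ∞`. -/
def SqSupIntegrable {mΩ : MeasurableSpace Ω} (Q : Measure Ω) (X : ℝ → Ω → ℝ) (T : ℝ) : Prop :=
  ∫⁻ ω, ⨆ t ∈ Set.Icc (0 : ℝ) T, ENNReal.ofReal (X t ω ^ 2) ∂Q < ⊤

/-- The family `{M t : t ∈ [0, T]}` is uniformly integrable under `Q`. -/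
def UIFamilyOn {mΩ : MeasurableSpace Ω} (Q : Measure Ω) (M : ℝ → Ω → ℝ) (T : ℝ) : Prop :=
  ∀ ε : ℝ, 0 < ε → ∃ C : ℝ, 0 ≤ C ∧ ∀ t ∈ Set.Icc (0 : ℝ) T,
    ∫⁻ ω in {ω | C ≤ |M t ω|}, ENNReal.ofReal |M t ω| ∂Q ≤ ENNReal.ofReal ε

/-- The natural filtration of the process `U`: `F^U_t = σ(U s : 0 ≤ s ≤ t)`. -/
def natFilt (U : ℝ → Ω → ℝ) (t : ℝ) : MeasurableSpace Ω :=
  ⨆ s ∈ Set.Icc (0 : ℝ) t, MeasurableSpace.comap (U s) Real.measurableSpace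

/-! If some `A ∈ F 0` had `0 < P A < 1`, reweight the unique equivalent martingale measure `Q`
by the density equal to `1 + Q Aᶜ` on `A` and to `Q Aᶜ` on `Aᶜ`. Its total mass is
`(1 + Q Aᶜ) Q A + Q Aᶜ Q Aᶜ = Q A + Q Aᶜ = 1`, it is equivalent to `P`, and it gives `A` a larger
mass than `Q` does. Since the density is `F s`-measurable for every `s`, conditional expectations
given `F s` do not change, so `X` is still a martingale under it. -/

section Reweight

open scoped ENNReal

variable {m mΩ : MeasurableSpace Ω} {μ : Measure Ω} {A : Set Ω} {c d : ℝ≥0∞}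

def reweight (μ : Measure Ω) (A : Set Ω) (c d : ℝ≥0∞) : Measure Ω :=
  c • μ.restrict A + d • μ.restrict Aᶜ

lemma reweight_apply (hA : MeasurableSet A) (s : Set Ω) :
    reweight μ A c d s = c * μ (s ∩ A) + d * μ (s ∩ Aᶜ) := by
  simp only [reweight, Measure.add_apply, Measure.smul_apply, smul_eq_mul,
    Measure.restrict_apply' hA, Measure.restrict_apply' hA.compl]

lemma isFiniteMeasure_reweight [IsFiniteMeasure μ] (hc : c ≠ ∞) (hd : d ≠ ∞) :
    IsFiniteMeasure (reweight μ A c d) :=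
  have := Measure.smul_finite (μ.restrict A) hc
  have := Measure.smul_finite (μ.restrict Aᶜ) hd
  inferInstanceAs (IsFiniteMeasure (c • μ.restrict A + d • μ.restrict Aᶜ))

lemma reweight_absolutelyContinuous : reweight μ A c d ≪ μ :=
  (Measure.smul_absolutelyContinuous.trans Measure.absolutelyContinuous_restrict).add_left
    (Measure.smul_absolutelyContinuous.trans Measure.absolutelyContinuous_restrict)

lemma absolutelyContinuous_reweight (hA : MeasurableSet A) (hc : c ≠ 0) (hd : d ≠ 0) :
    μ ≪ reweight μ A c d := by
  conv_lhs => rw [← Measure.restrict_add_restrict_compl (μ := μ) hA]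
  exact (Measure.absolutelyContinuous_smul hc).add (Measure.absolutelyContinuous_smul hd)

lemma integrable_reweight {f : Ω → ℝ} (hf : Integrable f μ) (hc : c ≠ ∞) (hd : d ≠ ∞) :
    Integrable f (reweight μ A c d) :=
  (hf.restrict.smul_measure hc).add_measure (hf.restrict.smul_measure hd)

lemma setIntegral_reweight (hc : c ≠ ∞) (hd : d ≠ ∞) {f : Ω → ℝ} (hf : Integrable f μ)
    {B : Set Ω} (hB : MeasurableSet B) :
    ∫ x in B, f x ∂reweight μ A c d =
      c.toReal * ∫ x in B ∩ A, f x ∂μ + d.toReal * ∫ x in B ∩ Aᶜ, f x ∂μ := by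
  rw [reweight, Measure.restrict_add, Measure.restrict_smul, Measure.restrict_smul,
    Measure.restrict_restrict hB, Measure.restrict_restrict hB,
    integral_add_measure (hf.restrict.smul_measure hc) (hf.restrict.smul_measure hd),
    integral_smul_measure, integral_smul_measure, smul_eq_mul, smul_eq_mul]

lemma condExp_reweight_ae_eq [IsFiniteMeasure μ] (hm : m ≤ mΩ) (hA : MeasurableSet[m] A)
    (hc : c ≠ ∞) (hd : d ≠ ∞) {f : Ω → ℝ} (hf : Integrable f μ) :
    (reweight μ A c d)[f|m] =ᵐ[reweight μ A c d] μ[f|m] := by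
  have := isFiniteMeasure_reweight (μ := μ) (A := A) hc hd
  refine (ae_eq_condExp_of_forall_setIntegral_eq hm (integrable_reweight hf hc hd)
    (fun B _ _ => (integrable_reweight integrable_condExp hc hd).integrableOn)
    (fun B hB _ => ?_) stronglyMeasurable_condExp.aestronglyMeasurable).symm
  rw [setIntegral_reweight hc hd integrable_condExp (hm _ hB),
    setIntegral_reweight hc hd hf (hm _ hB),
    setIntegral_condExp hm hf (hB.inter hA), setIntegral_condExp hm hf (hB.inter hA.compl)]

lemma IsMartingaleOn.reweight [IsFiniteMeasure μ] {F : ℝ → MeasurableSpace Ω}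
    {X : ℝ → Ω → ℝ} {T : ℝ} (hμ : IsMartingaleOn μ F X T)
    (hF : ∀ t ∈ Icc (0 : ℝ) T, F t ≤ mΩ)
    (hA : ∀ t ∈ Icc (0 : ℝ) T, MeasurableSet[F t] A) (hc : c ≠ ∞) (hd : d ≠ ∞) :
    IsMartingaleOn (reweight μ A c d) F X T := by
  refine ⟨fun t ht => integrable_reweight (hμ.1 t ht) hc hd, fun s t hs hst htT => ?_⟩
  have hsT : s ∈ Icc (0 : ℝ) T := ⟨hs, hst.trans htT⟩
  have hXt : Integrable (X t) μ := hμ.1 t ⟨hs.trans hst, htT⟩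
  exact (condExp_reweight_ae_eq (hF s hsT) (hA s hsT) hc hd hXt).trans
    (reweight_absolutelyContinuous.ae_le (hμ.2 s t hs hst htT))

lemma isProbabilityMeasure_reweight [IsProbabilityMeasure μ] (hA : MeasurableSet A) :
    IsProbabilityMeasure (reweight μ A (1 + μ Aᶜ) (μ Aᶜ)) := by
  constructor
  rw [reweight_apply hA, univ_inter, univ_inter, add_mul, one_mul, add_assoc, ← mul_add,
    measure_add_measure_compl hA, measure_univ, mul_one, measure_add_measure_compl hA,
    measure_univ]

lemma reweight_ne_self [IsFiniteMeasure μ] (hA : MeasurableSet A) (hA₀ : μ A ≠ 0)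
    (hAc₀ : μ Aᶜ ≠ 0) : reweight μ A (1 + μ Aᶜ) (μ Aᶜ) ≠ μ := by
  intro h
  have hμA : μ A + μ Aᶜ * μ A = μ A + 0 := by
    simpa [reweight_apply hA, add_mul] using congrArg (· A) h
  exact mul_ne_zero hAc₀ hA₀ ((ENNReal.add_right_inj (measure_ne_top μ A)).1 hμA)

end Reweight

theorem statement_9_general {Ω : Type*} {m𝓕 : MeasurableSpace Ω}
    (P : Measure Ω) [IsProbabilityMeasure P]
    (T : ℝ) (hT : 0 < T)
    (F : ℝ → MeasurableSpace Ω)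
    (hF_mono : ∀ s t : ℝ, s ≤ t → F s ≤ F t) (hF_le : ∀ t : ℝ, F t ≤ m𝓕)
    (X : ℝ → Ω → ℝ)
    (PX : @Measure Ω (F T))
    (hH1 : MartMeasures P F T (hF_le T) X = {PX}) :
    ∀ A : Set Ω, MeasurableSet[F 0] A → P A = 0 ∨ P A = 1 := by
  intro A hA
  by_contra! hPA
  obtain ⟨hprob, hPX_ac, hac_PX, hmart⟩ : PX ∈ MartMeasures P F T (hF_le T) X := hH1 ▸ rfl
  have hAT : MeasurableSet[F T] A := hF_mono 0 T hT.le _ hA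
  have hPXA : PX A ≠ 0 := fun h => hPA.1 <| trim_measurableSet_eq (hF_le T) hAT ▸ hac_PX h
  have hPXAc : PX Aᶜ ≠ 0 := fun h => hPA.2 <| (prob_compl_eq_zero_iff (hF_le T _ hAT)).1 <|
    trim_measurableSet_eq (hF_le T) hAT.compl ▸ hac_PX h
  have hν : reweight PX A (1 + PX Aᶜ) (PX Aᶜ) ∈ MartMeasures P F T (hF_le T) X :=
    ⟨isProbabilityMeasure_reweight hAT, reweight_absolutelyContinuous.trans hPX_ac,
      hac_PX.trans (absolutelyContinuous_reweight hAT (by simp) hPXAc),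
      hmart.reweight (fun t ht => hF_mono t T ht.2) (fun t ht => hF_mono 0 t ht.1 _ hA)
        (by simp) (measure_ne_top _ _)⟩
  rw [hH1, mem_singleton_iff] at hν
  exact reweight_ne_self hAT hPXA hPXAc hν

/-- If the set `ℙ(X, F)` of equivalent martingale measures for `X` is a
singleton, then the initial σ-algebra `F 0` is `P`-trivial. -/
theorem statement_9 {Ω : Type*} {m𝓕 : MeasurableSpace Ω}
    (P : Measure Ω) [IsProbabilityMeasure P]
    (T : ℝ) (hT : 0 < T)
    (F : ℝ → MeasurableSpace Ω)
    (hF_mono : ∀ s t : ℝ, s ≤ t → F s ≤ F t) (hF_le : ∀ t : ℝ, F t ≤ m𝓕)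
    (X : ℝ → Ω → ℝ)
    (hX_adapted : AdaptedOn F X T)
    (hX_int : ∀ t ∈ Set.Icc (0 : ℝ) T, Integrable (X t) P)
    (PX : @Measure Ω (F T))
    (hH1 : MartMeasures P F T (hF_le T) X = {PX}) :
    ∀ A : Set Ω, MeasurableSet[F 0] A → P A = 0 ∨ P A = 1 :=
  statement_9_general P T hT F hF_mono hF_le X PX hH1

end PaperStmts
end
end

section
/- Let X = (X_t)_{t∈[0,T]} be an F-adapted process. If P(X,F) is a singleton {P*}, then P* is an extremal point of Q(X,F): whenever P* = αQ₁ + (1−α)Q₂ with α ∈ (0,1) and Q₁, Q₂ ∈ Q(X,F), necessarily Q₁ = Q₂ = P*. -/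
/-!
If `P* = α Q₁ + (1 - α) Q₂` with `Q₁, Q₂` martingale measures, then each `Qᵢ ≪ P*`. For a
martingale measure `Q ≪ P*`, the midpoint `(Q + P*) / 2` is again a martingale measure (the
martingale property is linear in the measure, via its set-integral characterisation) and it is
equivalent to `P* ~ P`, so it lies in `ℙ(X, F) = {P*}`; cancelling `P* / 2` gives `Q = P*`.
-/

open MeasureTheory ProbabilityTheory Filter Set
open scoped ENNReal

noncomputable section

namespace PaperStmts

variable {Ω : Type*}

section

variable {mΩ : MeasurableSpace Ω}

lemma integral_smul_add_smul_measure {μ ν : Measure Ω} {f : Ω → ℝ}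
    (hμ : Integrable f μ) (hν : Integrable f ν) {a b : ℝ≥0∞} (ha : a ≠ ∞) (hb : b ≠ ∞) :
    ∫ x, f x ∂(a • μ + b • ν) = a.toReal * ∫ x, f x ∂μ + b.toReal * ∫ x, f x ∂ν := by
  rw [integral_add_measure (hμ.smul_measure ha) (hν.smul_measure hb), integral_smul_measure,
    integral_smul_measure, smul_eq_mul, smul_eq_mul]

lemma isProbabilityMeasure_smul_add_smul {μ ν : Measure Ω} [IsProbabilityMeasure μ]
    [IsProbabilityMeasure ν] {a b : ℝ≥0∞} (hab : a + b = 1) :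
    IsProbabilityMeasure (a • μ + b • ν) :=
  ⟨by simp [hab]⟩

lemma eq_of_smul_add_smul_eq {μ ν : Measure Ω} [IsFiniteMeasure ν] {a b : ℝ≥0∞}
    (hab : a + b = 1) (ha : a ≠ 0) (h : a • μ + b • ν = ν) : μ = ν := by
  have ha_top : a ≠ ∞ := ne_top_of_le_ne_top ENNReal.one_ne_top (hab ▸ le_self_add)
  have := ν.smul_finite (ne_top_of_le_ne_top ENNReal.one_ne_top (hab ▸ le_add_self))
  have hsmul : a • μ = a • ν := by
    rwa [← Measure.add_left_inj (b • ν), ← add_smul, hab, one_smul]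
  simpa [smul_smul, ENNReal.inv_mul_cancel ha ha_top] using congrArg (a⁻¹ • ·) hsmul

variable {F : ℝ → MeasurableSpace Ω} {T : ℝ} {X : ℝ → Ω → ℝ}

lemma IsMartingaleOn.setIntegral_eq {Q : Measure Ω} [IsFiniteMeasure Q]
    (h : IsMartingaleOn Q F X T) {s t : ℝ} (hs : 0 ≤ s) (hst : s ≤ t) (htT : t ≤ T)
    (hFs : F s ≤ mΩ) {A : Set Ω} (hA : MeasurableSet[F s] A) :
    ∫ x in A, X s x ∂Q = ∫ x in A, X t x ∂Q := by
  rw [← setIntegral_condExp hFs (h.1 t ⟨hs.trans hst, htT⟩) hA]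
  exact setIntegral_congr_ae (hFs A hA) ((h.2 s t hs hst htT).mono fun x hx _ ↦ hx.symm)

lemma IsMartingaleOn.smul_add_smul (hF : ∀ s ∈ Icc 0 T, F s ≤ mΩ) (hX : AdaptedOn F X T)
    {Q₁ Q₂ : Measure Ω} [IsFiniteMeasure Q₁] [IsFiniteMeasure Q₂]
    (h₁ : IsMartingaleOn Q₁ F X T) (h₂ : IsMartingaleOn Q₂ F X T)
    {a b : ℝ≥0∞} (ha : a ≠ ∞) (hb : b ≠ ∞) :
    IsMartingaleOn (a • Q₁ + b • Q₂) F X T := by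
  have hint : ∀ t ∈ Icc 0 T, Integrable (X t) (a • Q₁ + b • Q₂) := fun t ht ↦
    ((h₁.1 t ht).smul_measure ha).add_measure ((h₂.1 t ht).smul_measure hb)
  refine ⟨hint, fun s t hs hst htT ↦ ?_⟩
  have hsI : s ∈ Icc 0 T := ⟨hs, hst.trans htT⟩
  have htI : t ∈ Icc 0 T := ⟨hs.trans hst, htT⟩
  have := Q₁.smul_finite ha
  have := Q₂.smul_finite hb
  refine (ae_eq_condExp_of_forall_setIntegral_eq (hF s hsI) (hint t htI)
    (fun _ _ _ ↦ (hint s hsI).integrableOn) (fun A hA _ ↦ ?_)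
    (hX s hsI).stronglyMeasurable.aestronglyMeasurable).symm
  simp only [Measure.restrict_add, Measure.restrict_smul]
  rw [integral_smul_add_smul_measure (h₁.1 s hsI).restrict (h₂.1 s hsI).restrict ha hb,
    integral_smul_add_smul_measure (h₁.1 t htI).restrict (h₂.1 t htI).restrict ha hb,
    h₁.setIntegral_eq hs hst htT (hF s hsI) hA, h₂.setIntegral_eq hs hst htT (hF s hsI) hA]

end

lemma eq_of_mem_QMeasures_of_absolutelyContinuous {m𝓕 : MeasurableSpace Ω} {P : Measure Ω}
    {F : ℝ → MeasurableSpace Ω} {T : ℝ} {X : ℝ → Ω → ℝ} (hF : ∀ s ∈ Icc 0 T, F s ≤ F T)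
    (hFT : F T ≤ m𝓕) (hX : AdaptedOn F X T) {Pstar : @Measure Ω (F T)}
    (hP : MartMeasures P F T hFT X = {Pstar}) ⦃Q : @Measure Ω (F T)⦄
    (hQ : Q ∈ QMeasures F T X) (hQP : Q ≪ Pstar) : Q = Pstar := by
  obtain ⟨hPprob, hPstarP, hPPstar, hPmart⟩ : Pstar ∈ MartMeasures P F T hFT X := hP ▸ rfl
  obtain ⟨hQprob, hQmart⟩ := hQ
  have hmid : (2⁻¹ : ℝ≥0∞) • Q + (2⁻¹ : ℝ≥0∞) • Pstar ∈ MartMeasures P F T hFT X :=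
    ⟨isProbabilityMeasure_smul_add_smul ENNReal.inv_two_add_inv_two,
      ((hQP.smul_left _).add_left Measure.smul_absolutelyContinuous).trans hPstarP,
      hPPstar.trans ((Measure.absolutelyContinuous_smul (by norm_num)).add_right' _),
      hQmart.smul_add_smul hF hX hPmart (by norm_num) (by norm_num)⟩
  rw [hP] at hmid
  exact eq_of_smul_add_smul_eq ENNReal.inv_two_add_inv_two (by norm_num) hmid

theorem statement_10_general {Ω : Type*} {m𝓕 : MeasurableSpace Ω}
    (P : Measure Ω)
    (T : ℝ)
    (F : ℝ → MeasurableSpace Ω)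
    (hF_mono : ∀ s t : ℝ, s ≤ t → F s ≤ F t) (hF_le : ∀ t : ℝ, F t ≤ m𝓕)
    (X : ℝ → Ω → ℝ)
    (hX_adapted : AdaptedOn F X T)
    (Pstar : @Measure Ω (F T))
    (hH1 : MartMeasures P F T (hF_le T) X = {Pstar}) :
    IsExtremalIn F T X Pstar := by
  obtain ⟨hPprob, -, -, hPmart⟩ : Pstar ∈ MartMeasures P F T (hF_le T) X := hH1 ▸ rfl
  have key := eq_of_mem_QMeasures_of_absolutelyContinuous (fun s hs ↦ hF_mono s T hs.2)
    (hF_le T) hX_adapted hH1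
  refine ⟨⟨hPprob, hPmart⟩, fun α Q₁ Q₂ hα0 hα1 hQ₁ hQ₂ hmix ↦ ?_⟩
  have hQ₁P : Q₁ ≪ Pstar :=
    hmix ▸ (Measure.absolutelyContinuous_smul (by simpa using hα0)).add_right _
  have hQ₂P : Q₂ ≪ Pstar :=
    hmix ▸ (Measure.absolutelyContinuous_smul (by simpa using hα1)).add_right' _
  exact ⟨key hQ₁ hQ₁P, key hQ₂ hQ₂P⟩

/-- key step in the proof of the second fundamental theorem of asset
pricing, Theorem 5.3 of the paper. If `ℙ(X, F)` is a singleton `{P*}`, then `P*` is an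
extremal point of `ℚ(X, F)`. -/
theorem statement_10 {Ω : Type*} {m𝓕 : MeasurableSpace Ω}
    (P : Measure Ω) [IsProbabilityMeasure P]
    (T : ℝ) (hT : 0 < T)
    (F : ℝ → MeasurableSpace Ω)
    (hF_mono : ∀ s t : ℝ, s ≤ t → F s ≤ F t) (hF_le : ∀ t : ℝ, F t ≤ m𝓕)
    (X : ℝ → Ω → ℝ)
    (hX_adapted : AdaptedOn F X T)
    (Pstar : @Measure Ω (F T))
    (hH1 : MartMeasures P F T (hF_le T) X = {Pstar}) :
    IsExtremalIn F T X Pstar :=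
  statement_10_general P T F hF_mono hF_le X hX_adapted Pstar hH1

end PaperStmts
end
end

section
/- Let X be an F-adapted process and let Q ∈ Q(X,F). Assume that the σ-algebra F_0 is Q-trivial and that every bounded (Q,F)-martingale Z with Z_0 = 0 Q-a.s. such that (Z_t X_t)_{t∈[0,T]} is a (Q,F)-martingale satisfies Z_t = 0 Q-a.s. for all t ∈ [0,T]. Then Q is an extremal point of Q(X,F). -/
open MeasureTheory ProbabilityTheory Filter Set

noncomputable section

namespace PaperStmts

variable {Ω : Type*}

/-!
Write `Q = α Q₁ + (1 - α) Q₂`. Then `Q₁ ≤ α⁻¹ Q`, so the density `g = dQ₁/dQ` is bounded and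
so is the density process `D t = E_Q[g | F t]`, a `Q`-martingale. By Bayes' formula, `X` being
a `Q₁`-martingale makes `D X` a `Q`-martingale. Since `F 0` is `Q`-trivial and `Q₁ ≪ Q`, the
two measures agree on `F 0`, so `D 0 = 1`. Hence `Z = D - 1` is a bounded martingale, null at
`0`, with `Z X` a martingale; it vanishes, so `D T = g = 1` and `Q₁ = Q`. Likewise `Q₂ = Q`.
-/

section Martingales

variable {m : MeasurableSpace Ω} {Q : Measure Ω} {F : ℝ → MeasurableSpace Ω} {T : ℝ}
  {X Y : ℝ → Ω → ℝ}

theorem IsMartingaleOn.congr (hX : IsMartingaleOn Q F X T)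
    (hXY : ∀ t ∈ Icc (0 : ℝ) T, X t =ᵐ[Q] Y t) : IsMartingaleOn Q F Y T :=
  ⟨fun t ht => (hX.1 t ht).congr (hXY t ht), fun s t hs hst htT =>
    (condExp_congr_ae (hXY t ⟨hs.trans hst, htT⟩)).symm.trans
      ((hX.2 s t hs hst htT).trans (hXY s ⟨hs, hst.trans htT⟩))⟩

theorem IsMartingaleOn.sub (hX : IsMartingaleOn Q F X T) (hY : IsMartingaleOn Q F Y T) :
    IsMartingaleOn Q F (X - Y) T :=
  ⟨fun t ht => (hX.1 t ht).sub (hY.1 t ht), fun s t hs hst htT =>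
    (condExp_sub (hX.1 t ⟨hs.trans hst, htT⟩) (hY.1 t ⟨hs.trans hst, htT⟩) _).trans
      ((hX.2 s t hs hst htT).sub (hY.2 s t hs hst htT))⟩

theorem isMartingaleOn_const [IsFiniteMeasure Q] (hF : ∀ t ≤ T, F t ≤ m) (c : ℝ) :
    IsMartingaleOn Q F (fun _ _ => c) T :=
  ⟨fun _ _ => integrable_const c, fun s _ _ hst htT => by
    rw [condExp_const (hF s (hst.trans htT))]⟩

theorem isMartingaleOn_condExp [IsFiniteMeasure Q] (hF_mono : ∀ s t, s ≤ t → F s ≤ F t)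
    (hF : ∀ t ≤ T, F t ≤ m) (g : Ω → ℝ) : IsMartingaleOn Q F (fun t => Q[g | F t]) T :=
  ⟨fun _ _ => integrable_condExp, fun s t _ hst htT =>
    condExp_condExp_of_le (hF_mono s t hst) (hF t htT)⟩

theorem exists_bounded_adapted_ae_eq {R : ℝ} (hR : 0 ≤ R) (hX : AdaptedOn F X T)
    (hbdd : ∀ t ∈ Icc (0 : ℝ) T, ∀ᵐ ω ∂Q, |X t ω| ≤ R) :
    ∃ Z : ℝ → Ω → ℝ, AdaptedOn F Z T ∧ (∀ t ∈ Icc (0 : ℝ) T, ∀ ω, |Z t ω| ≤ R) ∧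
      ∀ t ∈ Icc (0 : ℝ) T, Z t =ᵐ[Q] X t :=
  ⟨fun t ω => max (-R) (min R (X t ω)),
    fun t ht => measurable_const.max (measurable_const.min (hX t ht)),
    fun _ _ _ => abs_le.2 ⟨le_max_left _ _, max_le (by linarith) (min_le_left _ _)⟩,
    fun t ht => (hbdd t ht).mono fun ω hω => by
      rw [abs_le] at hω
      simp only [min_eq_right hω.2, max_eq_right hω.1]⟩

end Martingales

section Densities

variable {m₁ m : MeasurableSpace Ω} {Q Q₁ : Measure Ω}

theorem rnDeriv_le_of_le_smul [SigmaFinite Q] {c : ENNReal} (hle : Q₁ ≤ c • Q) :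
    Q₁.rnDeriv Q ≤ᵐ[Q] fun _ => c := by
  refine ae_le_of_forall_setLIntegral_le_of_sigmaFinite (Q₁.measurable_rnDeriv Q)
    fun s _ _ => ?_
  rw [setLIntegral_const, ← smul_eq_mul, ← Measure.smul_apply]
  exact (Measure.setLIntegral_rnDeriv_le s).trans (hle s)

theorem le_inv_smul_of_eq_smul_add {Q' : Measure Ω} {a : ENNReal} (ha₀ : a ≠ 0) (ha : a ≠ ⊤)
    (hQ : Q = a • Q₁ + Q') : Q₁ ≤ a⁻¹ • Q := fun s =>
  calc Q₁ s = a⁻¹ * (a * Q₁ s) := (ENNReal.inv_mul_cancel_left ha₀ ha).symm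
    _ ≤ a⁻¹ * (a * Q₁ s + Q' s) := by gcongr; exact le_self_add
    _ = (a⁻¹ • Q) s := by rw [hQ]; rfl

theorem apply_eq_of_absolutelyContinuous_of_zero_or_one [IsProbabilityMeasure Q]
    [IsProbabilityMeasure Q₁] (hQ₁ : Q₁ ≪ Q) {A : Set Ω} (hA : MeasurableSet A)
    (h : Q A = 0 ∨ Q A = 1) : Q₁ A = Q A := by
  rcases h with h | h
  · rw [h, hQ₁ h]
  · rw [h, ← prob_compl_eq_zero_iff hA]
    exact hQ₁ ((prob_compl_eq_zero_iff hA).2 h)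

theorem condExp_toReal_rnDeriv_ae_eq_one_iff [IsFiniteMeasure Q] [IsFiniteMeasure Q₁]
    (hm : m₁ ≤ m) (hQ₁ : Q₁ ≪ Q) :
    Q[fun ω => (Q₁.rnDeriv Q ω).toReal | m₁] =ᵐ[Q] 1 ↔
      ∀ A, MeasurableSet[m₁] A → Q₁ A = Q A := by
  have hint : ∀ A, MeasurableSet[m₁] A →
      ∫ ω in A, (Q₁.rnDeriv Q ω).toReal ∂Q = (Q₁ A).toReal :=
    fun A _ => Measure.setIntegral_toReal_rnDeriv hQ₁ A
  constructor
  · intro h A hA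
    have hA' := hint A hA
    rw [← setIntegral_condExp hm Measure.integrable_toReal_rnDeriv hA,
      setIntegral_congr_ae (hm A hA) (h.mono fun _ hω _ => hω)] at hA'
    simp only [Pi.one_apply, setIntegral_const, smul_eq_mul, mul_one, measureReal_def] at hA'
    exact ((ENNReal.toReal_eq_toReal_iff' (measure_ne_top _ _) (measure_ne_top _ _)).1 hA').symm
  · intro h
    refine (ae_eq_condExp_of_forall_setIntegral_eq hm Measure.integrable_toReal_rnDeriv
      (fun _ _ _ => (integrable_const 1).integrableOn) (fun A hA _ => ?_)
      stronglyMeasurable_const.aestronglyMeasurable).symm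
    simp [hint A hA, h A hA, measureReal_def]

theorem condExp_toReal_rnDeriv_mul [IsFiniteMeasure Q] [IsFiniteMeasure Q₁] (hm : m₁ ≤ m)
    (hQ₁ : Q₁ ≪ Q) {f h : Ω → ℝ} (hf : Integrable f Q₁) (hh : StronglyMeasurable[m₁] h)
    (hfh : Q₁[f | m₁] =ᵐ[Q₁] h) :
    Q[fun ω => (Q₁.rnDeriv Q ω).toReal * f ω | m₁] =ᵐ[Q]
      fun ω => Q[fun ω => (Q₁.rnDeriv Q ω).toReal | m₁] ω * h ω := by
  have hgf : Integrable (fun ω => (Q₁.rnDeriv Q ω).toReal * f ω) Q :=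
    (integrable_toReal_rnDeriv_mul_iff hQ₁).2 hf
  have hgh : Integrable (fun ω => (Q₁.rnDeriv Q ω).toReal * h ω) Q :=
    (integrable_toReal_rnDeriv_mul_iff hQ₁).2 (integrable_condExp.congr hfh)
  refine (ae_eq_condExp_of_forall_setIntegral_eq hm hgf
    (fun _ _ _ => integrable_condExp.integrableOn) (fun A hA _ => ?_)
    stronglyMeasurable_condExp.aestronglyMeasurable).symm.trans
    (condExp_mul_of_stronglyMeasurable_right hh hgh Measure.integrable_toReal_rnDeriv)
  calc ∫ ω in A, Q[fun ω => (Q₁.rnDeriv Q ω).toReal * h ω | m₁] ω ∂Q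
      = ∫ ω in A, (Q₁.rnDeriv Q ω).toReal * h ω ∂Q := setIntegral_condExp hm hgh hA
    _ = ∫ ω in A, h ω ∂Q₁ := setIntegral_toReal_rnDeriv_mul hQ₁ (hm A hA)
    _ = ∫ ω in A, Q₁[f | m₁] ω ∂Q₁ :=
        setIntegral_congr_ae (hm A hA) (hfh.mono fun _ hω _ => hω.symm)
    _ = ∫ ω in A, f ω ∂Q₁ := setIntegral_condExp hm hf hA
    _ = ∫ ω in A, (Q₁.rnDeriv Q ω).toReal * f ω ∂Q :=
        (setIntegral_toReal_rnDeriv_mul hQ₁ (hm A hA)).symm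

end Densities

section DensityProcess

variable {m : MeasurableSpace Ω} {Q Q₁ : Measure Ω} {F : ℝ → MeasurableSpace Ω} {T : ℝ}
  {X : ℝ → Ω → ℝ}

theorem isMartingaleOn_condExp_toReal_rnDeriv_mul [IsFiniteMeasure Q] [IsFiniteMeasure Q₁]
    (hF_mono : ∀ s t, s ≤ t → F s ≤ F t) (hF : ∀ t ≤ T, F t ≤ m) (hQ₁ : Q₁ ≪ Q)
    (hX : AdaptedOn F X T) (hXQ₁ : IsMartingaleOn Q₁ F X T) :
    IsMartingaleOn Q F
      (fun t ω => Q[fun ω => (Q₁.rnDeriv Q ω).toReal | F t] ω * X t ω) T := by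
  have hBayes : ∀ s t, 0 ≤ s → s ≤ t → t ≤ T →
      Q[fun ω => (Q₁.rnDeriv Q ω).toReal * X t ω | F s] =ᵐ[Q]
        fun ω => Q[fun ω => (Q₁.rnDeriv Q ω).toReal | F s] ω * X s ω :=
    fun s t hs hst htT => condExp_toReal_rnDeriv_mul (hF s (hst.trans htT)) hQ₁
      (hXQ₁.1 t ⟨hs.trans hst, htT⟩) (hX s ⟨hs, hst.trans htT⟩).stronglyMeasurable
      (hXQ₁.2 s t hs hst htT)
  refine ⟨fun t ht => integrable_condExp.congr (hBayes t t ht.1 le_rfl ht.2),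
    fun s t hs hst htT => ?_⟩
  calc _ =ᵐ[Q] Q[Q[fun ω => (Q₁.rnDeriv Q ω).toReal * X t ω | F t] | F s] :=
        condExp_congr_ae (hBayes t t (hs.trans hst) le_rfl htT).symm
    _ =ᵐ[Q] Q[fun ω => (Q₁.rnDeriv Q ω).toReal * X t ω | F s] :=
        condExp_condExp_of_le (hF_mono s t hst) (hF t htT)
    _ =ᵐ[Q] _ := hBayes s t hs hst htT

theorem apply_eq_of_le_smul_of_orthogonal_martingales_vanish [IsFiniteMeasure Q]
    [IsFiniteMeasure Q₁] (hT : 0 ≤ T) (hF_mono : ∀ s t, s ≤ t → F s ≤ F t) (hFT : F T ≤ m)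
    (hX : AdaptedOn F X T) (hXQ : IsMartingaleOn Q F X T) (hXQ₁ : IsMartingaleOn Q₁ F X T)
    {c : ENNReal} (hc : c ≠ ⊤) (hle : Q₁ ≤ c • Q)
    (h0 : ∀ A, MeasurableSet[F 0] A → Q₁ A = Q A)
    (hvanish : ∀ Z : ℝ → Ω → ℝ,
      AdaptedOn F Z T →
      (∃ C : ℝ, ∀ t ∈ Set.Icc (0 : ℝ) T, ∀ ω, |Z t ω| ≤ C) →
      IsMartingaleOn Q F Z T →
      Z 0 =ᵐ[Q] 0 →
      IsMartingaleOn Q F (fun t ω => Z t ω * X t ω) T →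
      ∀ t ∈ Set.Icc (0 : ℝ) T, Z t =ᵐ[Q] 0) :
    ∀ A, MeasurableSet[F T] A → Q₁ A = Q A := by
  have hF : ∀ t ≤ T, F t ≤ m := fun t ht => (hF_mono t T ht).trans hFT
  have hQ₁ : Q₁ ≪ Q := Measure.absolutelyContinuous_of_le_smul hle
  set D : ℝ → Ω → ℝ := fun t => Q[fun ω => (Q₁.rnDeriv Q ω).toReal | F t]
  have hg_bdd : ∀ᵐ ω ∂Q, |(Q₁.rnDeriv Q ω).toReal| ≤ c.toReal :=
    (rnDeriv_le_of_le_smul hle).mono fun ω hω => by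
      rw [abs_of_nonneg ENNReal.toReal_nonneg]
      exact ENNReal.toReal_mono hc hω
  have hD_bdd : ∀ t, ∀ᵐ ω ∂Q, |D t ω - 1| ≤ c.toReal + 1 := fun t =>
    (ae_bdd_abs_condExp_of_ae_bdd_abs (m := F t) hg_bdd).mono fun ω hω =>
      (abs_sub _ _).trans (by rw [abs_one]; exact add_le_add_left hω 1)
  obtain ⟨Z, hZ_adapted, hZ_bdd, hZD⟩ := exists_bounded_adapted_ae_eq (Q := Q) (F := F)
    (T := T) (X := fun t ω => D t ω - 1) (by positivity)
    (fun t _ => stronglyMeasurable_condExp.measurable.sub_const 1) (fun t _ => hD_bdd t)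
  have hZ_mart : IsMartingaleOn Q F Z T :=
    ((isMartingaleOn_condExp hF_mono hF _).sub (isMartingaleOn_const hF 1)).congr
      fun t ht => (hZD t ht).symm
  have hZX_mart : IsMartingaleOn Q F (fun t ω => Z t ω * X t ω) T :=
    ((isMartingaleOn_condExp_toReal_rnDeriv_mul hF_mono hF hQ₁ hX hXQ₁).sub hXQ).congr
      fun t ht => (hZD t ht).mono fun ω hω => by simp only [Pi.sub_apply, hω]; ring
  have hZ0 : Z 0 =ᵐ[Q] 0 := by
    filter_upwards [hZD 0 ⟨le_rfl, hT⟩,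
      (condExp_toReal_rnDeriv_ae_eq_one_iff (hF 0 hT) hQ₁).2 h0] with ω hZω hDω
    simp [hZω, D, hDω]
  have hZT := hvanish Z hZ_adapted ⟨_, hZ_bdd⟩ hZ_mart hZ0 hZX_mart T ⟨hT, le_rfl⟩
  refine (condExp_toReal_rnDeriv_ae_eq_one_iff hFT hQ₁).1 ?_
  filter_upwards [hZD T ⟨hT, le_rfl⟩, hZT] with ω hZω hZTω
  simp only [Pi.zero_apply, hZω] at hZTω
  simp only [Pi.one_apply]
  linarith

end DensityProcess

theorem statement_12_general {Ω : Type*}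
    (T : ℝ) (hT : 0 < T)
    (F : ℝ → MeasurableSpace Ω)
    (hF_mono : ∀ s t : ℝ, s ≤ t → F s ≤ F t)
    (X : ℝ → Ω → ℝ)
    (hX_adapted : AdaptedOn F X T)
    (Q : @Measure Ω (F T))
    (hQ_mem : Q ∈ QMeasures F T X)
    (hF0_trivial : ∀ A : Set Ω, MeasurableSet[F 0] A → Q A = 0 ∨ Q A = 1)
    (hvanish : ∀ Z : ℝ → Ω → ℝ,
      AdaptedOn F Z T →
      (∃ C : ℝ, ∀ t ∈ Set.Icc (0 : ℝ) T, ∀ ω, |Z t ω| ≤ C) →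
      IsMartingaleOn Q F Z T →
      Z 0 =ᵐ[Q] 0 →
      IsMartingaleOn Q F (fun t ω => Z t ω * X t ω) T →
      ∀ t ∈ Set.Icc (0 : ℝ) T, Z t =ᵐ[Q] 0) :
    IsExtremalIn F T X Q := by
  let _ : MeasurableSpace Ω := F T
  obtain ⟨hQ_prob, hXQ⟩ := hQ_mem
  have eq_of_component : ∀ (a : ℝ) (Q₁ Q' : @Measure Ω (F T)), 0 < a →
      Q₁ ∈ QMeasures F T X → Q = ENNReal.ofReal a • Q₁ + Q' → Q₁ = Q := by
    rintro a Q₁ Q' ha ⟨hQ₁_prob, hXQ₁⟩ hQ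
    have ha₀ : ENNReal.ofReal a ≠ 0 := by simpa using ha
    have hle := le_inv_smul_of_eq_smul_add ha₀ ENNReal.ofReal_ne_top hQ
    have hQ₁ := Measure.absolutelyContinuous_of_le_smul hle
    have h0 : ∀ A, MeasurableSet[F 0] A → Q₁ A = Q A := fun A hA =>
      apply_eq_of_absolutelyContinuous_of_zero_or_one hQ₁ (hF_mono 0 T hT.le A hA)
        (hF0_trivial A hA)
    exact Measure.ext fun A hA => apply_eq_of_le_smul_of_orthogonal_martingales_vanish hT.le
      hF_mono le_rfl hX_adapted hXQ hXQ₁ (ENNReal.inv_ne_top.2 ha₀) hle h0 hvanish A hA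
  exact ⟨⟨hQ_prob, hXQ⟩, fun α Q₁ Q₂ hα0 hα1 hQ₁ hQ₂ hQ =>
    ⟨eq_of_component α Q₁ _ hα0 hQ₁ hQ,
      eq_of_component (1 - α) Q₂ _ (by linarith) hQ₂ (hQ.trans (add_comm _ _))⟩⟩

/-- (direction b) ⇒ a) of Theorem 5.1 of the paper, Jacod's extremality
theorem). Let `Q ∈ ℚ(X, F)`. If `F 0` is `Q`-trivial and every bounded `(Q, F)`-martingale
`Z` with `Z 0 = 0` `Q`-a.s. such that `Z X` is a `(Q, F)`-martingale vanishes, then `Q` is an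
extremal point of `ℚ(X, F)`. -/
theorem statement_12 {Ω : Type*} {m𝓕 : MeasurableSpace Ω}
    (T : ℝ) (hT : 0 < T)
    (F : ℝ → MeasurableSpace Ω)
    (hF_mono : ∀ s t : ℝ, s ≤ t → F s ≤ F t) (hF_le : ∀ t : ℝ, F t ≤ m𝓕)
    (X : ℝ → Ω → ℝ)
    (hX_adapted : AdaptedOn F X T)
    (Q : @Measure Ω (F T))
    (hQ_mem : Q ∈ QMeasures F T X)
    (hF0_trivial : ∀ A : Set Ω, MeasurableSet[F 0] A → Q A = 0 ∨ Q A = 1)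
    (hvanish : ∀ Z : ℝ → Ω → ℝ,
      AdaptedOn F Z T →
      (∃ C : ℝ, ∀ t ∈ Set.Icc (0 : ℝ) T, ∀ ω, |Z t ω| ≤ C) →
      IsMartingaleOn Q F Z T →
      Z 0 =ᵐ[Q] 0 →
      IsMartingaleOn Q F (fun t ω => Z t ω * X t ω) T →
      ∀ t ∈ Set.Icc (0 : ℝ) T, Z t =ᵐ[Q] 0) :
    IsExtremalIn F T X Q :=
  statement_12_general T hT F hF_mono X hX_adapted Q hQ_mem hF0_trivial hvanish

end PaperStmts
end
end
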